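/- arXiv:2409.00697 — 3 statements merged into one kernel-verified Lean document; each statement's English description precedes it below -/
import Mathlib

section
/- For all integers p, r ≥ 4, Γρ(P_p ∨ P_r) = Γρ(P_p ∨ C_r) = Γρ(C_p ∨ C_r) = p + r − min{⌈p/3⌉, ⌈r/3⌉} + 1, where P_m and C_m denote the path and cycle on m vertices and ∨ denotes the join of graphs. -/
open SimpleGraph

/-- A packing `k`-coloring of `G`: colors in `{1,…,k}` and vertices of equal color `i`
are at distance greater than `i` (vertices in different components are unconstrained). -/
def IsPackingColoring {V : Type*} (G : SimpleGraph V) (k : ℕ) (c : V → ℕ) : Prop :=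
  (∀ v, 1 ≤ c v ∧ c v ≤ k) ∧
  ∀ u v, u ≠ v → c u = c v → G.Reachable u v → c u < G.dist u v

/-- A greedy packing `k`-coloring: a packing `k`-coloring that uses color `k` and in which
every vertex of color `i ≥ 2` has, for every `j < i`, a vertex of color `j`
at distance at most `j`. -/
def IsGreedyPackingColoring {V : Type*} (G : SimpleGraph V) (k : ℕ) (c : V → ℕ) : Prop :=
  IsPackingColoring G k c ∧ (∃ v, c v = k) ∧
  ∀ v, ∀ j, 1 ≤ j → j < c v → ∃ u, c u = j ∧ G.Reachable u v ∧ G.dist u v ≤ j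

/-- The Grundy packing chromatic number: the largest `k` admitting a greedy packing
`k`-coloring. -/
noncomputable def grundyPackingChromaticNumber {V : Type*} (G : SimpleGraph V) : ℕ :=
  sSup {k | ∃ c : V → ℕ, IsGreedyPackingColoring G k c}

/-- The packing chromatic number: the smallest `k` admitting a packing `k`-coloring. -/
noncomputable def packingChromaticNumber {V : Type*} (G : SimpleGraph V) : ℕ :=
  sInf {k | ∃ c : V → ℕ, IsPackingColoring G k c}

/-- `s` is an independent set of `G`. -/
def IsIndepFinset {V : Type*} (G : SimpleGraph V) (s : Finset V) : Prop :=
  ∀ u ∈ s, ∀ v ∈ s, ¬ G.Adj u v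

/-- `s` is a maximal independent set of `G`. -/
def IsMaxIndepFinset {V : Type*} (G : SimpleGraph V) (s : Finset V) : Prop :=
  IsIndepFinset G s ∧ ∀ t : Finset V, IsIndepFinset G t → s ⊆ t → s = t

/-- The independent domination number `i(G)`:
the minimum cardinality of a maximal independent set. -/
noncomputable def indepDomNum {V : Type*} (G : SimpleGraph V) [Fintype V] : ℕ :=
  sInf {n | ∃ s : Finset V, IsMaxIndepFinset G s ∧ s.card = n}

/-- The graph `G^ℓ`: same vertices, `u ∼ v` iff `u ≠ v` and `d_G(u,v) ≤ ℓ`. -/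
def distPow {V : Type*} (G : SimpleGraph V) (ℓ : ℕ) : SimpleGraph V where
  Adj u v := u ≠ v ∧ G.dist u v ≤ ℓ
  symm := by
    constructor
    rintro u v ⟨h1, h2⟩
    exact ⟨h1.symm, by rwa [SimpleGraph.dist_comm]⟩
  loopless := by constructor; rintro v ⟨h, _⟩; exact h rfl

/-- The graph `G(k)`: vertex set is `k` disjoint copies of `V(G)`, the copy `i : Fin k`
playing the role of `G^(i+1)`; the `k` copies of each vertex form a clique, and within the
`i`-th copy two distinct vertices are adjacent iff their distance in `G` is at most `i+1`. -/
def levelGraph {V : Type*} (G : SimpleGraph V) (k : ℕ) : SimpleGraph (V × Fin k) where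
  Adj p q := (p.1 = q.1 ∧ p.2 ≠ q.2) ∨
    (p.1 ≠ q.1 ∧ p.2 = q.2 ∧ G.dist p.1 q.1 ≤ (p.2 : ℕ) + 1)
  symm := by
    constructor
    rintro p q (⟨h1, h2⟩ | ⟨h1, h2, h3⟩)
    · exact Or.inl ⟨h1.symm, h2.symm⟩
    · refine Or.inr ⟨h1.symm, h2.symm, ?_⟩
      rw [SimpleGraph.dist_comm, ← h2]
      exact h3
  loopless := by constructor; rintro p (⟨_, h⟩ | ⟨h, _, _⟩) <;> exact h rfl

/-- `A` is a maximal independent set of the subgraph of `H` induced on `S`. -/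
def IsMaxIndepSetOn {V : Type*} (H : SimpleGraph V) (S : Set V) (A : Set V) : Prop :=
  A ⊆ S ∧ (∀ u ∈ A, ∀ v ∈ A, ¬ H.Adj u v) ∧
  ∀ B : Set V, B ⊆ S → (∀ u ∈ B, ∀ v ∈ B, ¬ H.Adj u v) → A ⊆ B → A = B

/-- The eccentricity of a vertex. -/
noncomputable def eccent {V : Type*} (G : SimpleGraph V) [Fintype V] (v : V) : ℕ :=
  Finset.univ.sup (fun u => G.dist v u)

/-- The radius of a graph. -/
noncomputable def graphRadius {V : Type*} (G : SimpleGraph V) [Fintype V] : ℕ :=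
  sInf (Set.range (eccent G))

/-- The diameter of a graph. -/
noncomputable def graphDiam {V : Type*} (G : SimpleGraph V) [Fintype V] : ℕ :=
  Finset.univ.sup (eccent G)

/-- The diametrical graph `D(G)`: `x ∼ y` iff `d_G(x,y) = diam(G)`. -/
noncomputable def diamGraph {V : Type*} (G : SimpleGraph V) [Fintype V] : SimpleGraph V where
  Adj u v := u ≠ v ∧ G.dist u v = graphDiam G
  symm := by
    constructor
    rintro u v ⟨h1, h2⟩
    exact ⟨h1.symm, by rwa [SimpleGraph.dist_comm]⟩
  loopless := by constructor; rintro v ⟨h, _⟩; exact h rfl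

/-- `Q` is a clique of the subgraph of `H` induced on `S`. -/
def IsCliqueFinsetOn {V : Type*} (H : SimpleGraph V) (S : Set V) (Q : Finset V) : Prop :=
  ↑Q ⊆ S ∧ ∀ u ∈ Q, ∀ v ∈ Q, u ≠ v → H.Adj u v

/-- `Q` is a maximal clique of the subgraph of `H` induced on `S`. -/
def IsMaxCliqueFinsetOn {V : Type*} (H : SimpleGraph V) (S : Set V) (Q : Finset V) : Prop :=
  IsCliqueFinsetOn H S Q ∧ ∀ R : Finset V, IsCliqueFinsetOn H S R → Q ⊆ R → Q = R

/-- The join `G ∨ H` of two graphs. -/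
def joinGraph {V W : Type*} (G : SimpleGraph V) (H : SimpleGraph W) :
    SimpleGraph (V ⊕ W) where
  Adj p q := match p, q with
    | .inl u, .inl v => G.Adj u v
    | .inr u, .inr v => H.Adj u v
    | .inl _, .inr _ => True
    | .inr _, .inl _ => True
  symm := by
    constructor
    rintro (u | u) (v | v) h
    · exact G.adj_symm h
    · trivial
    · trivial
    · exact H.adj_symm h
  loopless := by
    constructor
    rintro (u | u) h
    · exact G.irrefl h
    · exact H.irrefl h

/-- `K_{n,n}` minus a perfect matching: parts `{u_i}` and `{v_i}`, with `u_i ∼ v_j` iff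
`i ≠ j`. -/
def completeBipartiteMinusMatching (n : ℕ) : SimpleGraph (Fin n ⊕ Fin n) where
  Adj p q := match p, q with
    | .inl i, .inr j => i ≠ j
    | .inr i, .inl j => i ≠ j
    | _, _ => False
  symm := by constructor; rintro (i | i) (j | j) h <;> first | exact h.symm | exact h
  loopless := by constructor; rintro (i | i) h <;> exact h


/-! In a graph of diameter at most 2, a greedy packing colouring can use each colour `j ≥ 2`
at most once, while its colour class `1` is a maximal independent set; conversely, colouring
a maximal independent set `S` by `1` and the remaining vertices by distinct colours `2, 3, …`
is greedy. Hence `Γρ = n - i + 1`, where `i` is the independent domination number. A join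
of two nonempty graphs has diameter at most 2, its maximal independent sets are those of
either side, and `i(P_m) = i(C_m) = ⌈m/3⌉` since each vertex of a cycle dominates at most
three vertices. -/

open Finset

def IsDominatingFinset {V : Type*} (G : SimpleGraph V) (s : Finset V) : Prop :=
  ∀ v ∉ s, ∃ u ∈ s, G.Adj u v

section IndependentDomination

variable {V : Type*} {G G' : SimpleGraph V} {s : Finset V}

theorem IsIndepFinset.anti (h : G ≤ G') (hs : IsIndepFinset G' s) : IsIndepFinset G s :=
  fun u hu v hv hadj => hs u hu v hv (h hadj)

theorem IsDominatingFinset.mono (h : G ≤ G') (hs : IsDominatingFinset G s) :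
    IsDominatingFinset G' s :=
  fun v hv => (hs v hv).imp fun _ ⟨hu, hadj⟩ => ⟨hu, h hadj⟩

theorem isMaxIndepFinset_iff :
    IsMaxIndepFinset G s ↔ IsIndepFinset G s ∧ IsDominatingFinset G s := by
  classical
  refine ⟨fun ⟨hind, hmax⟩ => ⟨hind, fun v hv => ?_⟩,
    fun ⟨hind, hdom⟩ => ⟨hind, fun t ht hst => ?_⟩⟩
  · by_contra! hno
    have hins : IsIndepFinset G (insert v s) := by
      intro x hx y hy hxy
      rw [mem_insert] at hx hy
      rcases hx with rfl | hx <;> rcases hy with rfl | hy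
      · exact G.irrefl hxy
      · exact hno y hy hxy.symm
      · exact hno x hx hxy
      · exact hind x hx y hy hxy
    exact hv (hmax _ hins (subset_insert v s) ▸ mem_insert_self v s)
  · refine hst.antisymm fun v hvt => ?_
    by_contra hvs
    obtain ⟨u, hus, hadj⟩ := hdom v hvs
    exact ht u (hst hus) v hvt hadj

theorem IsMaxIndepFinset.nonempty [Nonempty V] (hs : IsMaxIndepFinset G s) : s.Nonempty := by
  obtain v : V := Classical.arbitrary V
  by_cases hv : v ∈ s
  · exact ⟨v, hv⟩
  · obtain ⟨u, hu, -⟩ := (isMaxIndepFinset_iff.1 hs).2 v hv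
    exact ⟨u, hu⟩

theorem exists_isMaxIndepFinset [Finite V] (G : SimpleGraph V) : ∃ s, IsMaxIndepFinset G s := by
  obtain ⟨s, hs, hmax⟩ := (Set.toFinite {s : Finset V | IsIndepFinset G s}).exists_maximal
    ⟨∅, fun _ h => absurd h (notMem_empty _)⟩
  exact ⟨s, hs, fun t ht hst => hst.antisymm (hmax ht hst)⟩

variable [Fintype V]

theorem indepDomNum_le (hs : IsMaxIndepFinset G s) : indepDomNum G ≤ s.card :=
  Nat.sInf_le ⟨s, hs, rfl⟩

theorem exists_isMaxIndepFinset_card_eq_indepDomNum (G : SimpleGraph V) :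
    ∃ s, IsMaxIndepFinset G s ∧ s.card = indepDomNum G := by
  obtain ⟨s, hs⟩ := exists_isMaxIndepFinset G
  exact Nat.sInf_mem (s := {n | ∃ s, IsMaxIndepFinset G s ∧ s.card = n}) ⟨_, s, hs, rfl⟩

theorem indepDomNum_eq {n : ℕ} (hle : ∀ t, IsMaxIndepFinset G t → n ≤ t.card)
    (hs : IsMaxIndepFinset G s) (hcard : s.card = n) : indepDomNum G = n := by
  obtain ⟨t, ht, htc⟩ := exists_isMaxIndepFinset_card_eq_indepDomNum G
  exact le_antisymm (hcard ▸ indepDomNum_le hs) (htc ▸ hle t ht)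

theorem card_le_mul_card_of_isDominatingFinset [G.LocallyFinite] {d : ℕ}
    (hd : ∀ v, G.degree v ≤ d) (hs : IsDominatingFinset G s) :
    Fintype.card V ≤ (d + 1) * s.card := by
  classical
  calc Fintype.card V = (univ : Finset V).card := rfl
    _ ≤ (s.biUnion fun u => insert u (G.neighborFinset u)).card := by
      refine card_le_card fun v _ => ?_
      by_cases hv : v ∈ s
      · exact mem_biUnion.2 ⟨v, hv, mem_insert_self _ _⟩
      · obtain ⟨u, hu, hadj⟩ := hs v hv
        exact mem_biUnion.2 ⟨u, hu, mem_insert_of_mem ((mem_neighborFinset _ _ _).2 hadj)⟩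
    _ ≤ ∑ u ∈ s, (insert u (G.neighborFinset u)).card := card_biUnion_le
    _ ≤ ∑ _u ∈ s, (d + 1) := sum_le_sum fun u _ => (card_insert_le _ _).trans
      (Nat.succ_le_succ ((card_neighborFinset_eq_degree G u).trans_le (hd u)))
    _ = (d + 1) * s.card := by rw [sum_const, smul_eq_mul, mul_comm]

end IndependentDomination

section DiameterTwo

variable {V : Type*} {G : SimpleGraph V} {k : ℕ} {c : V → ℕ}

theorem reachable_and_dist_le_two_of_ediam_le_two (hG : G.ediam ≤ 2) (u v : V) :
    G.Reachable u v ∧ G.dist u v ≤ 2 := by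
  have h : G.edist u v ≤ 2 := edist_le_ediam.trans hG
  have hr : G.Reachable u v := reachable_of_edist_ne_top (ne_top_of_le_ne_top (by decide) h)
  refine ⟨hr, ?_⟩
  rw [← hr.coe_dist_eq_edist] at h
  exact_mod_cast h

theorem IsPackingColoring.injOn_of_ediam_le_two (hG : G.ediam ≤ 2)
    (hc : IsPackingColoring G k c) : Set.InjOn c {v | 2 ≤ c v} := by
  intro u hu v _ huv
  by_contra hne
  obtain ⟨hr, hd⟩ := reachable_and_dist_le_two_of_ediam_le_two hG u v
  have hlt := hc.2 u v hne huv hr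
  have h2 : 2 ≤ c u := hu
  omega

theorem IsGreedyPackingColoring.exists_apply_eq (hc : IsGreedyPackingColoring G k c) {j : ℕ}
    (hj : 1 ≤ j) (hjk : j ≤ k) : ∃ v, c v = j := by
  obtain ⟨-, ⟨w, hw⟩, hgreedy⟩ := hc
  rcases hjk.eq_or_lt with rfl | hlt
  · exact ⟨w, hw⟩
  · obtain ⟨u, hu, -⟩ := hgreedy w j hj (hw ▸ hlt)
    exact ⟨u, hu⟩

theorem IsGreedyPackingColoring.isMaxIndepFinset_filter_eq_one [Fintype V]
    (hc : IsGreedyPackingColoring G k c) : IsMaxIndepFinset G {v | c v = 1} := by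
  obtain ⟨⟨hrange, hpack⟩, -, hgreedy⟩ := hc
  refine isMaxIndepFinset_iff.2 ⟨fun u hu v hv hadj => ?_, fun v hv => ?_⟩
  · simp only [mem_filter, mem_univ, true_and] at hu hv
    have := hpack u v hadj.ne (hu.trans hv.symm) hadj.reachable
    rw [hu, dist_eq_one_iff_adj.2 hadj] at this
    exact lt_irrefl _ this
  · simp only [mem_filter, mem_univ, true_and] at hv
    obtain ⟨u, hu, hr, hd⟩ := hgreedy v 1 le_rfl (by have := (hrange v).1; omega)
    have hne : u ≠ v := by rintro rfl; exact hv hu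
    exact ⟨u, by simpa using hu, dist_eq_one_iff_adj.1 (hd.antisymm (hr.pos_dist_of_ne hne))⟩

theorem IsGreedyPackingColoring.le_card_sub_indepDomNum_add_one [Fintype V] (hG : G.ediam ≤ 2)
    (hc : IsGreedyPackingColoring G k c) : k ≤ Fintype.card V - indepDomNum G + 1 := by
  classical
  set S : Finset V := {v | c v = 1}
  set T : Finset V := {v | 2 ≤ c v}
  have hcolors : Icc 2 k ⊆ T.image c := fun j hj => by
    rw [mem_Icc] at hj
    obtain ⟨v, hv⟩ := hc.exists_apply_eq (by omega) hj.2
    exact mem_image.2 ⟨v, by simp [T, hv, hj.1], hv⟩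
  have hT : k - 1 ≤ T.card := by
    have hinj : Set.InjOn c T :=
      (hc.1.injOn_of_ediam_le_two hG).mono fun v hv => by simpa [T] using hv
    simpa [card_image_of_injOn hinj] using card_le_card hcolors
  have hST : S.card + T.card ≤ Fintype.card V := by
    rw [← card_union_of_disjoint (disjoint_filter.2 fun v _ h1 h2 => by omega)]
    exact card_le_univ _
  have hS : indepDomNum G ≤ S.card := indepDomNum_le hc.isMaxIndepFinset_filter_eq_one
  omega

section IndepSetColoring

variable [Fintype V] [DecidableEq V] {S : Finset V} {v : V}

noncomputable def indepSetColoring (S : Finset V) (v : V) : ℕ :=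
  if h : v ∈ S then 1 else (Sᶜ.equivFin ⟨v, mem_compl.2 h⟩ : ℕ) + 2

theorem indepSetColoring_of_mem (h : v ∈ S) : indepSetColoring S v = 1 := dif_pos h

theorem indepSetColoring_eq_one_iff : indepSetColoring S v = 1 ↔ v ∈ S := by
  unfold indepSetColoring
  split_ifs with h <;> simp [h]

theorem indepSetColoring_le : indepSetColoring S v ≤ Sᶜ.card + 1 := by
  unfold indepSetColoring
  split_ifs
  · omega
  · have := (Sᶜ.equivFin ⟨v, mem_compl.2 ‹_›⟩).isLt
    omega

theorem indepSetColoring_equivFin_symm (i : Fin Sᶜ.card) :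
    indepSetColoring S (Sᶜ.equivFin.symm i) = i + 2 := by
  have h : (Sᶜ.equivFin.symm i : V) ∉ S := mem_compl.1 (Sᶜ.equivFin.symm i).2
  simp [indepSetColoring, h]

theorem indepSetColoring_injOn : Set.InjOn (indepSetColoring S) ↑Sᶜ := by
  intro u hu v hv huv
  simp only [coe_compl, Set.mem_compl_iff, mem_coe] at hu hv
  simp only [indepSetColoring, hu, hv, dite_false, add_left_inj, Fin.val_inj,
    Equiv.apply_eq_iff_eq, Subtype.mk.injEq] at huv
  exact huv

theorem isGreedyPackingColoring_indepSetColoring [Nonempty V] (hG : G.ediam ≤ 2)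
    (hS : IsMaxIndepFinset G S) :
    IsGreedyPackingColoring G (Sᶜ.card + 1) (indepSetColoring S) := by
  obtain ⟨hind, hdom⟩ := isMaxIndepFinset_iff.1 hS
  refine ⟨⟨fun v => ⟨?_, indepSetColoring_le⟩, fun u v hne huv hr => ?_⟩, ?_,
    fun v j hj hjv => ?_⟩
  · unfold indepSetColoring
    split_ifs <;> omega
  · by_cases hu : u ∈ S
    · have hv : v ∈ S := indepSetColoring_eq_one_iff.1 (huv ▸ indepSetColoring_of_mem hu)
      rw [indepSetColoring_of_mem hu]
      exact hr.one_lt_dist_of_ne_of_not_adj hne (hind u hu v hv)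
    · have hv : v ∉ S := fun hv =>
        hu (indepSetColoring_eq_one_iff.1 (huv.trans (indepSetColoring_of_mem hv)))
      exact absurd (indepSetColoring_injOn (by simpa using hu) (by simpa using hv) huv) hne
  · rcases Sᶜ.eq_empty_or_nonempty with h | h
    · obtain v : V := Classical.arbitrary V
      refine ⟨v, ?_⟩
      rw [h, card_empty, indepSetColoring_of_mem ((compl_eq_empty_iff S).1 h ▸ mem_univ v)]
    · refine ⟨Sᶜ.equivFin.symm ⟨Sᶜ.card - 1, by have := h.card_pos; omega⟩, ?_⟩
      rw [indepSetColoring_equivFin_symm, Fin.val_mk]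
      have := h.card_pos
      omega
  · have hvS : v ∉ S := fun hv => by rw [indepSetColoring_of_mem hv] at hjv; omega
    rcases hj.eq_or_lt with rfl | hj2
    · obtain ⟨u, hu, hadj⟩ := hdom v hvS
      exact ⟨u, indepSetColoring_of_mem hu, hadj.reachable, (dist_eq_one_iff_adj.2 hadj).le⟩
    · have hjS : j - 2 < Sᶜ.card := by
        have := indepSetColoring_le (S := S) (v := v)
        omega
      refine ⟨Sᶜ.equivFin.symm ⟨j - 2, hjS⟩, ?_, ?_⟩
      · rw [indepSetColoring_equivFin_symm, Fin.val_mk]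
        omega
      · obtain ⟨hr, hd⟩ := reachable_and_dist_le_two_of_ediam_le_two hG
          (Sᶜ.equivFin.symm ⟨j - 2, hjS⟩ : V) v
        exact ⟨hr, by omega⟩

end IndepSetColoring

theorem grundyPackingChromaticNumber_eq_of_ediam_le_two [Fintype V] [Nonempty V]
    (hG : G.ediam ≤ 2) :
    grundyPackingChromaticNumber G = Fintype.card V - indepDomNum G + 1 := by
  classical
  obtain ⟨S, hS, hcard⟩ := exists_isMaxIndepFinset_card_eq_indepDomNum G
  have hmem : Fintype.card V - indepDomNum G + 1 ∈ {k | ∃ c, IsGreedyPackingColoring G k c} :=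
    ⟨_, by rw [← hcard, ← card_compl]; exact isGreedyPackingColoring_indepSetColoring hG hS⟩
  have hub : ∀ k ∈ {k | ∃ c, IsGreedyPackingColoring G k c},
      k ≤ Fintype.card V - indepDomNum G + 1 :=
    fun k ⟨_, hc⟩ => hc.le_card_sub_indepDomNum_add_one hG
  exact le_antisymm (csSup_le ⟨_, hmem⟩ hub) (le_csSup ⟨_, hub⟩ hmem)

end DiameterTwo

section Join

variable {V W : Type*} {G : SimpleGraph V} {H : SimpleGraph W}

theorem joinGraph_ediam_le_two [Nonempty V] [Nonempty W] : (joinGraph G H).ediam ≤ 2 := by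
  obtain ⟨a₀⟩ := ‹Nonempty V›
  obtain ⟨b₀⟩ := ‹Nonempty W›
  have hlr : ∀ a b, (joinGraph G H).edist (.inl a) (.inr b) = 1 :=
    fun _ _ => edist_eq_one_iff_adj.2 trivial
  have hrl : ∀ a b, (joinGraph G H).edist (.inr b) (.inl a) = 1 :=
    fun _ _ => edist_eq_one_iff_adj.2 trivial
  refine ediam_le_of_edist_le fun u v => ?_
  rcases u with a | b <;> rcases v with a' | b'
  · calc _ ≤ _ := SimpleGraph.edist_triangle (v := .inr b₀)
      _ = 2 := by rw [hlr, hrl]; rfl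
  · rw [hlr]; norm_num
  · rw [hrl]; norm_num
  · calc _ ≤ _ := SimpleGraph.edist_triangle (v := .inl a₀)
      _ = 2 := by rw [hlr, hrl]; rfl

theorem IsIndepFinset.eq_map_inl_or_eq_map_inr {s : Finset (V ⊕ W)}
    (hs : IsIndepFinset (joinGraph G H) s) :
    s = s.toLeft.map .inl ∨ s = s.toRight.map .inr := by
  rcases s.toRight.eq_empty_or_nonempty with h | ⟨b, hb⟩
  · left
    conv_lhs => rw [← toLeft_disjSum_toRight (u := s), h, disjSum_empty]
  · right
    have h : s.toLeft = ∅ := eq_empty_of_forall_notMem fun a ha =>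
      hs _ (mem_toLeft.1 ha) _ (mem_toRight.1 hb) trivial
    conv_lhs => rw [← toLeft_disjSum_toRight (u := s), h, empty_disjSum]

theorem isMaxIndepFinset_joinGraph_map_inl_iff [Nonempty V] {t : Finset V} :
    IsMaxIndepFinset (joinGraph G H) (t.map .inl) ↔ IsMaxIndepFinset G t := by
  refine ⟨fun h => isMaxIndepFinset_iff.2 ⟨fun u hu v hv =>
    h.1 _ (mem_map_of_mem _ hu) _ (mem_map_of_mem _ hv), fun v hv => ?_⟩, fun h => ?_⟩
  · obtain ⟨_ | _, hu, hadj⟩ := (isMaxIndepFinset_iff.1 h).2 (.inl v) (by simpa using hv)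
    · exact ⟨_, by simpa using hu, hadj⟩
    · simp at hu
  · obtain ⟨hind, hdom⟩ := isMaxIndepFinset_iff.1 h
    obtain ⟨a, ha⟩ := h.nonempty
    refine isMaxIndepFinset_iff.2 ⟨?_, ?_⟩
    · simp only [IsIndepFinset, mem_map, Function.Embedding.inl_apply]
      rintro _ ⟨x, hx, rfl⟩ _ ⟨y, hy, rfl⟩
      exact hind x hx y hy
    · rintro (v | v) hv
      · obtain ⟨u, hu, hadj⟩ := hdom v (by simpa using hv)
        exact ⟨.inl u, mem_map_of_mem _ hu, hadj⟩
      · exact ⟨.inl a, mem_map_of_mem _ ha, trivial⟩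

theorem isMaxIndepFinset_joinGraph_map_inr_iff [Nonempty W] {t : Finset W} :
    IsMaxIndepFinset (joinGraph G H) (t.map .inr) ↔ IsMaxIndepFinset H t := by
  refine ⟨fun h => isMaxIndepFinset_iff.2 ⟨fun u hu v hv =>
    h.1 _ (mem_map_of_mem _ hu) _ (mem_map_of_mem _ hv), fun v hv => ?_⟩, fun h => ?_⟩
  · obtain ⟨_ | _, hu, hadj⟩ := (isMaxIndepFinset_iff.1 h).2 (.inr v) (by simpa using hv)
    · simp at hu
    · exact ⟨_, by simpa using hu, hadj⟩
  · obtain ⟨hind, hdom⟩ := isMaxIndepFinset_iff.1 h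
    obtain ⟨b, hb⟩ := h.nonempty
    refine isMaxIndepFinset_iff.2 ⟨?_, ?_⟩
    · simp only [IsIndepFinset, mem_map, Function.Embedding.inr_apply]
      rintro _ ⟨x, hx, rfl⟩ _ ⟨y, hy, rfl⟩
      exact hind x hx y hy
    · rintro (v | v) hv
      · exact ⟨.inr b, mem_map_of_mem _ hb, trivial⟩
      · obtain ⟨u, hu, hadj⟩ := hdom v (by simpa using hv)
        exact ⟨.inr u, mem_map_of_mem _ hu, hadj⟩

variable [Fintype V] [Fintype W] [Nonempty V] [Nonempty W]

theorem indepDomNum_joinGraph :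
    indepDomNum (joinGraph G H) = min (indepDomNum G) (indepDomNum H) := by
  obtain ⟨s, hs, hsc⟩ := exists_isMaxIndepFinset_card_eq_indepDomNum (joinGraph G H)
  obtain ⟨t, ht, htc⟩ := exists_isMaxIndepFinset_card_eq_indepDomNum G
  obtain ⟨t', ht', htc'⟩ := exists_isMaxIndepFinset_card_eq_indepDomNum H
  refine le_antisymm (le_min ?_ ?_) ?_
  · simpa [htc] using indepDomNum_le (isMaxIndepFinset_joinGraph_map_inl_iff.2 ht)
  · simpa [htc'] using indepDomNum_le (isMaxIndepFinset_joinGraph_map_inr_iff.2 ht')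
  · rw [← hsc]
    rcases hs.1.eq_map_inl_or_eq_map_inr with h | h <;> rw [h] at hs ⊢ <;> rw [card_map]
    · exact (min_le_left _ _).trans (indepDomNum_le (isMaxIndepFinset_joinGraph_map_inl_iff.1 hs))
    · exact (min_le_right _ _).trans (indepDomNum_le (isMaxIndepFinset_joinGraph_map_inr_iff.1 hs))

theorem grundyPackingChromaticNumber_joinGraph :
    grundyPackingChromaticNumber (joinGraph G H) =
      Fintype.card V + Fintype.card W - min (indepDomNum G) (indepDomNum H) + 1 := by
  rw [grundyPackingChromaticNumber_eq_of_ediam_le_two joinGraph_ediam_le_two,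
    indepDomNum_joinGraph, Fintype.card_sum]

end Join

section PathCycle

theorem val_of_cycleGraph_adj {m : ℕ} {u v : Fin m} (h : (cycleGraph m).Adj u v) :
    u.val + 1 = v.val ∨ v.val + 1 = u.val ∨
      (u.val = 0 ∧ v.val + 1 = m) ∨ (v.val = 0 ∧ u.val + 1 = m) := by
  have hne := h.ne
  rw [cycleGraph_adj'] at h
  have hu := u.isLt
  have hv := v.isLt
  rcases lt_or_gt_of_ne hne with huv | hvu
  · rw [Fin.coe_sub_iff_lt.2 huv, Fin.coe_sub_iff_le.2 huv.le] at h
    rw [Fin.lt_def] at huv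
    omega
  · rw [Fin.coe_sub_iff_le.2 hvu.le, Fin.coe_sub_iff_lt.2 hvu] at h
    rw [Fin.lt_def] at hvu
    omega

theorem cycleGraph_degree_le_two {m : ℕ} (v : Fin m) : (cycleGraph m).degree v ≤ 2 := by
  match m, v with
  | 1, v => simp [cycleGraph_one_eq_bot]
  | n + 2, v => rw [cycleGraph_degree_two_le]; exact card_le_two

theorem le_card_of_isDominatingFinset_cycleGraph {m : ℕ} {s : Finset (Fin m)}
    (hs : IsDominatingFinset (cycleGraph m) s) : (m + 2) / 3 ≤ s.card := by
  have := card_le_mul_card_of_isDominatingFinset cycleGraph_degree_le_two hs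
  rw [Fintype.card_fin] at this
  omega

theorem exists_isIndepFinset_cycleGraph_isDominatingFinset_pathGraph (m : ℕ) :
    ∃ s : Finset (Fin m), IsIndepFinset (cycleGraph m) s ∧
      IsDominatingFinset (pathGraph m) s ∧ s.card = (m + 2) / 3 := by
  rcases m with _ | n
  · exact ⟨∅, fun _ h => absurd h (notMem_empty _), fun v => v.elim0, rfl⟩
  -- the vertices `1, 4, 7, …`, the last one clamped to the end vertex `n`
  let f : ℕ → Fin (n + 1) := fun a => ⟨min (3 * a + 1) n, by omega⟩
  refine ⟨(range ((n + 3) / 3)).image f, ?_, fun v hv => ?_, ?_⟩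
  · simp only [IsIndepFinset, mem_image, mem_range]
    rintro _ ⟨a, ha, rfl⟩ _ ⟨b, hb, rfl⟩ hadj
    have hne := hadj.ne
    have := val_of_cycleGraph_adj hadj
    simp only [ne_eq, Fin.ext_iff, f] at hne this
    omega
  · have hmem : f (v / 3) ∈ (range ((n + 3) / 3)).image f :=
      mem_image_of_mem _ (mem_range.2 (by omega))
    have hne : f (v / 3) ≠ v := fun h => hv (h ▸ hmem)
    refine ⟨_, hmem, pathGraph_adj.2 ?_⟩
    simp only [ne_eq, Fin.ext_iff, f] at hne ⊢
    omega
  · rw [card_image_of_injOn, card_range]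
    intro a ha b hb hab
    simp only [coe_range, Set.mem_Iio, Fin.ext_iff, f] at ha hb hab
    omega

theorem indepDomNum_cycleGraph (m : ℕ) : indepDomNum (cycleGraph m) = (m + 2) / 3 := by
  obtain ⟨s, hind, hdom, hcard⟩ :=
    exists_isIndepFinset_cycleGraph_isDominatingFinset_pathGraph m
  exact indepDomNum_eq
    (fun t ht => le_card_of_isDominatingFinset_cycleGraph (isMaxIndepFinset_iff.1 ht).2)
    (isMaxIndepFinset_iff.2 ⟨hind, hdom.mono pathGraph_le_cycleGraph⟩) hcard

theorem indepDomNum_pathGraph (m : ℕ) : indepDomNum (pathGraph m) = (m + 2) / 3 := by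
  obtain ⟨s, hind, hdom, hcard⟩ :=
    exists_isIndepFinset_cycleGraph_isDominatingFinset_pathGraph m
  exact indepDomNum_eq
    (fun t ht => le_card_of_isDominatingFinset_cycleGraph
      ((isMaxIndepFinset_iff.1 ht).2.mono pathGraph_le_cycleGraph))
    (isMaxIndepFinset_iff.2 ⟨hind.anti pathGraph_le_cycleGraph, hdom⟩) hcard

end PathCycle

/-- For `p, r ≥ 4`,
`Γρ(P_p ∨ P_r) = Γρ(P_p ∨ C_r) = Γρ(C_p ∨ C_r) = p + r - min{⌈p/3⌉, ⌈r/3⌉} + 1`. -/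
theorem grundyPackingChromaticNumber_join_paths_cycles (p r : ℕ) (hp : 4 ≤ p)
    (hr : 4 ≤ r) :
    grundyPackingChromaticNumber
        (joinGraph (SimpleGraph.pathGraph p) (SimpleGraph.pathGraph r)) =
      p + r - min ((p + 2) / 3) ((r + 2) / 3) + 1 ∧
    grundyPackingChromaticNumber
        (joinGraph (SimpleGraph.pathGraph p) (SimpleGraph.cycleGraph r)) =
      p + r - min ((p + 2) / 3) ((r + 2) / 3) + 1 ∧
    grundyPackingChromaticNumber
        (joinGraph (SimpleGraph.cycleGraph p) (SimpleGraph.cycleGraph r)) =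
      p + r - min ((p + 2) / 3) ((r + 2) / 3) + 1 := by
  have : Nonempty (Fin p) := ⟨⟨0, by omega⟩⟩
  have : Nonempty (Fin r) := ⟨⟨0, by omega⟩⟩
  simp only [grundyPackingChromaticNumber_joinGraph, indepDomNum_pathGraph,
    indepDomNum_cycleGraph, Fintype.card_fin, and_self]
end

section
/- Let n ≥ 3 and let G = K_{n,n} − M be the graph obtained from the complete bipartite graph with parts {u_1,…,u_n} and {v_1,…,v_n} by deleting the perfect matching M = {u_i v_i : 1 ≤ i ≤ n}. Then Γρ(G) = 2n − 2. -/
open SimpleGraph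

/-!
`K_{n,n} - M` has diameter `3`, and the only pairs at distance `3` are the matched pairs
`u_i, v_i`. Coloring `u_0, v_0` with `1`, `u_1, v_1` with `2` and the remaining `2n - 4` vertices
with distinct colors gives a greedy packing `(2n - 2)`-coloring. Conversely, in a greedy packing
`k`-coloring every color `1, …, k` occurs, so at least `k - 2` vertices have color `≥ 3`; the greedy
conditions for the colors `1` and `2` force at least four vertices of color `≤ 2`, whence
`k - 2 ≤ 2n - 4`.
-/

open SimpleGraph Finset

theorem Sum.swap_ne_self {α : Type*} (x : α ⊕ α) : x.swap ≠ x := by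
  rcases x with a | a <;> simp

theorem grundyPackingChromaticNumber_eq {V : Type*} {G : SimpleGraph V} {m : ℕ}
    (hm : ∃ c, IsGreedyPackingColoring G m c)
    (hle : ∀ k c, IsGreedyPackingColoring G k c → k ≤ m) :
    grundyPackingChromaticNumber G = m := by
  have hbdd : BddAbove {k | ∃ c, IsGreedyPackingColoring G k c} :=
    ⟨m, fun k ⟨c, hc⟩ ↦ hle k c hc⟩
  exact le_antisymm (csSup_le ⟨m, hm⟩ fun k ⟨c, hc⟩ ↦ hle k c hc) (le_csSup hbdd hm)

namespace IsGreedyPackingColoring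

variable {V : Type*} {G : SimpleGraph V} {k : ℕ} {c : V → ℕ}

theorem exists_eq (hc : IsGreedyPackingColoring G k c) {j : ℕ} (hj₁ : 1 ≤ j) (hjk : j ≤ k) :
    ∃ v, c v = j := by
  obtain ⟨w, hw⟩ := hc.2.1
  rcases hjk.lt_or_eq with hjk | rfl
  · obtain ⟨u, hu, -⟩ := hc.2.2 w j hj₁ (hw ▸ hjk)
    exact ⟨u, hu⟩
  · exact ⟨w, hw⟩

theorem sub_le_card_filter_lt [Fintype V] (hc : IsGreedyPackingColoring G k c) (m : ℕ) :
    k - m ≤ #{v | m < c v} := by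
  classical
  have hIoc : Ioc m k ⊆ image c {v | m < c v} := fun j hj ↦ by
    obtain ⟨hmj, hjk⟩ := mem_Ioc.mp hj
    obtain ⟨v, hv⟩ := hc.exists_eq (by omega) hjk
    exact mem_image.mpr ⟨v, mem_filter.mpr ⟨mem_univ v, hv ▸ hmj⟩, hv⟩
  calc k - m = #(Ioc m k) := (Nat.card_Ioc m k).symm
    _ ≤ #(image c {v | m < c v}) := card_le_card hIoc
    _ ≤ #{v | m < c v} := card_image_le

theorem exists_adj_eq_one (hc : IsGreedyPackingColoring G k c) {v : V} (hv : 2 ≤ c v) :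
    ∃ u, c u = 1 ∧ G.Adj u v := by
  obtain ⟨u, hu, hreach, hdist⟩ := hc.2.2 v 1 le_rfl hv
  have hne : u ≠ v := by rintro rfl; omega
  exact ⟨u, hu, dist_eq_one_iff_adj.mp (by have := hreach.pos_dist_of_ne hne; omega)⟩

/-- Either `y` itself or a color-`1` neighbour of `y` is a vertex of color at most `2`
outside `T`. -/
theorem card_lt_card_filter_le_two [Fintype V] [DecidableEq V]
    (hc : IsGreedyPackingColoring G k c) {T : Finset V} (hT : ∀ s ∈ T, c s ≤ 2) {y : V}
    (hy : y ∉ T) (hyT : ∀ s ∈ T, c s = 1 → ¬G.Adj s y) : #T < #{v | c v ≤ 2} := by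
  have hsub : T ⊆ ({v | c v ≤ 2} : Finset V) := fun s hs ↦ mem_filter.mpr ⟨mem_univ s, hT s hs⟩
  refine card_lt_card ((ssubset_iff_of_subset hsub).mpr ?_)
  by_cases hcy : c y ≤ 2
  · exact ⟨y, mem_filter.mpr ⟨mem_univ y, hcy⟩, hy⟩
  · obtain ⟨s, hs, hsy⟩ := hc.exists_adj_eq_one (by omega : 2 ≤ c y)
    exact ⟨s, mem_filter.mpr ⟨mem_univ s, by omega⟩, fun hsT ↦ hyT s hsT hs hsy⟩

end IsGreedyPackingColoring

namespace completeBipartiteMinusMatching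

variable {n : ℕ}

@[simp] theorem adj_inl_inr {i j : Fin n} :
    (completeBipartiteMinusMatching n).Adj (.inl i) (.inr j) ↔ i ≠ j := Iff.rfl

@[simp] theorem adj_inr_inl {i j : Fin n} :
    (completeBipartiteMinusMatching n).Adj (.inr i) (.inl j) ↔ i ≠ j := Iff.rfl

@[simp] theorem not_adj_inl_inl {i j : Fin n} :
    ¬(completeBipartiteMinusMatching n).Adj (.inl i) (.inl j) := id

@[simp] theorem not_adj_inr_inr {i j : Fin n} :
    ¬(completeBipartiteMinusMatching n).Adj (.inr i) (.inr j) := id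

theorem not_adj_swap (x : Fin n ⊕ Fin n) :
    ¬(completeBipartiteMinusMatching n).Adj x x.swap := by
  rcases x with i | i <;> simp

theorem not_adj_swap_of_adj {x y : Fin n ⊕ Fin n}
    (h : (completeBipartiteMinusMatching n).Adj x y) :
    ¬(completeBipartiteMinusMatching n).Adj x.swap y := by
  rcases x with i | i <;> rcases y with j | j <;> simp_all

theorem exists_not_adj_of_not_adj (hn : 3 ≤ n) {x y : Fin n ⊕ Fin n}
    (hxy : ¬(completeBipartiteMinusMatching n).Adj x y) (hyx : y ≠ x.swap) :
    ∃ w, w ≠ x ∧ w ≠ y ∧ w ≠ x.swap ∧ ¬(completeBipartiteMinusMatching n).Adj x w ∧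
      ¬(completeBipartiteMinusMatching n).Adj y w := by
  obtain ⟨l, hli, hlj⟩ := Fin.exists_ne_and_ne_of_two_lt (x.elim id id) (y.elim id id) (by omega)
  rcases x with i | i <;> rcases y with j | j
  · exact ⟨.inl l, by simp_all⟩
  · simp_all
  · simp_all
  · exact ⟨.inr l, by simp_all⟩

theorem exists_adj (hn : 3 ≤ n) (x : Fin n ⊕ Fin n) :
    ∃ w, (completeBipartiteMinusMatching n).Adj x w := by
  obtain ⟨l, hl, -⟩ := Fin.exists_ne_and_ne_of_two_lt (x.elim id id) (x.elim id id) (by omega)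
  rcases x with i | i
  · exact ⟨.inr l, Ne.symm hl⟩
  · exact ⟨.inl l, Ne.symm hl⟩

theorem exists_walk_length_le_two (hn : 3 ≤ n) {x y : Fin n ⊕ Fin n} (hxy : y ≠ x.swap) :
    ∃ p : (completeBipartiteMinusMatching n).Walk x y, p.length ≤ 2 := by
  by_cases hadj : (completeBipartiteMinusMatching n).Adj x y
  · exact ⟨hadj.toWalk, by simp⟩
  by_cases heq : x = y
  · subst heq
    exact ⟨.nil, by simp⟩
  -- `x` and `y` are distinct vertices on the same side: go through a third index
  obtain ⟨l, hli, hlj⟩ := Fin.exists_ne_and_ne_of_two_lt (x.elim id id) (y.elim id id) (by omega)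
  rcases x with i | i <;> rcases y with j | j
  · exact ⟨.cons (adj_inl_inr.mpr (by simpa using hli.symm))
      (.cons (adj_inr_inl.mpr (by simpa using hlj)) .nil), by simp⟩
  · simp_all
  · simp_all
  · exact ⟨.cons (adj_inr_inl.mpr (by simpa using hli.symm))
      (.cons (adj_inl_inr.mpr (by simpa using hlj)) .nil), by simp⟩

theorem exists_walk_length_le_three (hn : 3 ≤ n) (x y : Fin n ⊕ Fin n) :
    ∃ p : (completeBipartiteMinusMatching n).Walk x y, p.length ≤ 3 := by
  by_cases hxy : y = x.swap
  · obtain ⟨w, hxw⟩ := exists_adj hn x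
    have hyw : y ≠ w.swap := by
      rintro rfl
      exact hxw.ne (Sum.swap_leftInverse.injective hxy).symm
    obtain ⟨p, hp⟩ := exists_walk_length_le_two hn hyw
    exact ⟨.cons hxw p, by simp only [Walk.length_cons]; omega⟩
  · obtain ⟨p, hp⟩ := exists_walk_length_le_two hn hxy
    exact ⟨p, by omega⟩

theorem reachable (hn : 3 ≤ n) (x y : Fin n ⊕ Fin n) :
    (completeBipartiteMinusMatching n).Reachable x y :=
  (exists_walk_length_le_three hn x y).elim fun p _ ↦ p.reachable

theorem dist_le_two (hn : 3 ≤ n) {x y : Fin n ⊕ Fin n} (hxy : y ≠ x.swap) :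
    (completeBipartiteMinusMatching n).dist x y ≤ 2 :=
  (exists_walk_length_le_two hn hxy).elim fun p hp ↦ (dist_le p).trans hp

theorem dist_le_three (hn : 3 ≤ n) (x y : Fin n ⊕ Fin n) :
    (completeBipartiteMinusMatching n).dist x y ≤ 3 :=
  (exists_walk_length_le_three hn x y).elim fun p hp ↦ (dist_le p).trans hp

theorem dist_swap (hn : 3 ≤ n) (x : Fin n ⊕ Fin n) :
    (completeBipartiteMinusMatching n).dist x x.swap = 3 := by
  have hcommon : (completeBipartiteMinusMatching n).commonNeighbors x x.swap = ∅ :=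
    Set.eq_empty_of_forall_notMem fun w hw ↦ by
      rw [mem_commonNeighbors] at hw
      exact not_adj_swap_of_adj hw.1 hw.2
  have hedist := two_lt_edist_iff.mpr ⟨(Sum.swap_ne_self x).symm, not_adj_swap x, hcommon⟩
  rw [← (reachable hn x x.swap).coe_dist_eq_edist] at hedist
  have := dist_le_three hn x x.swap
  exact_mod_cast le_antisymm this (by exact_mod_cast Order.add_one_le_of_lt hedist)

variable {k : ℕ} {c : Fin n ⊕ Fin n → ℕ}

theorem eq_swap_of_eq_two (hn : 3 ≤ n)
    (hc : IsGreedyPackingColoring (completeBipartiteMinusMatching n) k c) {y z : Fin n ⊕ Fin n}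
    (hy : c y = 2) (hz : c z = 2) (hyz : y ≠ z) : y = z.swap := by
  by_contra h
  have hpacked := hc.1.2 z y hyz.symm (hz.trans hy.symm) (reachable hn z y)
  have := dist_le_two hn h
  omega

theorem swap_le_two_of_eq_two (hn : 3 ≤ n)
    (hc : IsGreedyPackingColoring (completeBipartiteMinusMatching n) k c) {z : Fin n ⊕ Fin n}
    (hz : c z = 2) : c z.swap ≤ 2 := by
  by_contra h
  obtain ⟨y, hy, -, hyd⟩ := hc.2.2 z.swap 2 one_le_two (by omega)
  have hyz : y ≠ z := by
    rintro rfl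
    have := dist_swap hn y
    omega
  obtain rfl := eq_swap_of_eq_two hn hc hy hz hyz
  omega

/-- A color-`2` vertex `z`, a color-`1` neighbour `t` of it and `z.swap` (whose color is `1` or
`2`) have color at most `2`; a fourth such vertex is found next to `t.swap` if `c z.swap = 2`,
and next to a vertex on the side of `t` other than `t, z.swap` if `c z.swap = 1`. -/
theorem four_le_card_filter_le_two (hn : 3 ≤ n)
    (hc : IsGreedyPackingColoring (completeBipartiteMinusMatching n) k c) (hk : 3 ≤ k) :
    4 ≤ #{v | c v ≤ 2} := by
  obtain ⟨z, hz⟩ := hc.exists_eq one_le_two (by omega : 2 ≤ k)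
  obtain ⟨t, ht, htz⟩ := hc.exists_adj_eq_one hz.ge
  have hzs := swap_le_two_of_eq_two hn hc hz
  have htzs : t ≠ z.swap := by
    rintro rfl
    exact not_adj_swap z htz.symm
  have hzt : z ≠ t := by
    rintro rfl
    omega
  have hzs_ne : z ≠ z.swap := (Sum.swap_ne_self z).symm
  have hT : #({z, z.swap, t} : Finset _) = 3 :=
    card_eq_three.mpr ⟨z, z.swap, t, hzs_ne, hzt, htzs.symm, rfl⟩
  have hTle : ∀ s ∈ ({z, z.swap, t} : Finset _), c s ≤ 2 := by
    simp only [mem_insert, mem_singleton]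
    rintro s (rfl | rfl | rfl) <;> omega
  suffices ∃ y ∉ ({z, z.swap, t} : Finset _), ∀ s ∈ ({z, z.swap, t} : Finset _),
      c s = 1 → ¬(completeBipartiteMinusMatching n).Adj s y by
    obtain ⟨y, hy, hyT⟩ := this
    have := hc.card_lt_card_filter_le_two hTle hy hyT
    omega
  simp only [mem_insert, mem_singleton, not_or, forall_eq_or_imp, forall_eq]
  rcases (show c z.swap = 1 ∨ c z.swap = 2 by have := hc.1.1 z.swap; omega) with hzs₁ | hzs₂
  · obtain ⟨w, hwz, hwt, hwzs, hzsw, htw⟩ :=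
      exists_not_adj_of_not_adj hn (not_adj_swap_of_adj htz.symm)
        (by simpa using htz.ne)
    rw [Sum.swap_swap] at hwzs
    exact ⟨w, ⟨hwzs, hwz, hwt⟩, by omega, fun _ ↦ hzsw, fun _ ↦ htw⟩
  · refine ⟨t.swap, ⟨?_, ?_, Sum.swap_ne_self t⟩, by omega, by omega, fun _ ↦ not_adj_swap t⟩
    · rintro rfl
      simp at htzs
    · intro h
      exact hzt (Sum.swap_leftInverse.injective h).symm

theorem le_of_isGreedyPackingColoring (hn : 3 ≤ n)
    (hc : IsGreedyPackingColoring (completeBipartiteMinusMatching n) k c) : k ≤ 2 * n - 2 := by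
  rcases lt_or_ge k 3 with hk | hk
  · omega
  have hlarge := hc.sub_le_card_filter_lt 2
  have hsmall := four_le_card_filter_le_two hn hc hk
  have hsum : #{v | 2 < c v} + #{v | c v ≤ 2} = 2 * n := by
    have := card_filter_add_card_filter_not (s := univ) (fun v ↦ 2 < c v)
    simp only [not_lt] at this
    rw [this, card_univ, Fintype.card_sum, Fintype.card_fin]
    ring
  omega

/-- `u_i ↦ i + 1`, while `v_0, v_1` repeat the colors `1, 2` of `u_0, u_1` (at distance `3`)
and `v_2, …, v_{n-1}` take the colors `n + 1, …, 2n - 2`. -/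
def extremalColoring (n : ℕ) : Fin n ⊕ Fin n → ℕ :=
  Sum.elim (fun i ↦ i + 1) (fun i ↦ if (i : ℕ) < 2 then i + 1 else i + n - 1)

theorem extremalColoring_mem_Icc (hn : 3 ≤ n) (x : Fin n ⊕ Fin n) :
    1 ≤ extremalColoring n x ∧ extremalColoring n x ≤ 2 * n - 2 := by
  rcases x with i | i <;> simp only [extremalColoring, Sum.elim_inl, Sum.elim_inr] <;>
    (try split_ifs) <;> omega

theorem eq_swap_of_extremalColoring_eq {x y : Fin n ⊕ Fin n} (hxy : x ≠ y)
    (h : extremalColoring n x = extremalColoring n y) :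
    y = x.swap ∧ extremalColoring n x ≤ 2 := by
  rcases x with i | i <;> rcases y with j | j <;> have := i.isLt <;> have := j.isLt <;>
    simp only [extremalColoring, Sum.elim_inl, Sum.elim_inr, ne_eq, Sum.inl.injEq, Sum.inr.injEq,
      Sum.swap_inl, Sum.swap_inr, reduceCtorEq, false_and, Fin.ext_iff] at * <;>
    (try split_ifs at *) <;> omega

theorem exists_extremalColoring_eq {j : ℕ} (hj₃ : 3 ≤ j) (hj : j ≤ 2 * n - 2) :
    ∃ x, extremalColoring n x = j := by
  rcases le_or_gt j n with hjn | hjn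
  · exact ⟨.inl ⟨j - 1, by omega⟩, by simp only [extremalColoring, Sum.elim_inl]; omega⟩
  · refine ⟨.inr ⟨j + 1 - n, by omega⟩, ?_⟩
    simp only [extremalColoring, Sum.elim_inr]
    split_ifs <;> omega

theorem exists_adj_extremalColoring_eq (hn : 3 ≤ n) {j : ℕ} (hj₁ : 1 ≤ j) (hj₂ : j ≤ 2)
    {x : Fin n ⊕ Fin n} (hjx : j < extremalColoring n x) :
    ∃ u, extremalColoring n u = j ∧ (completeBipartiteMinusMatching n).Adj u x := by
  rcases x with i | i
  · refine ⟨.inr ⟨j - 1, by omega⟩, ?_, ?_⟩ <;>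
      simp only [extremalColoring, Sum.elim_inl, Sum.elim_inr, adj_inr_inl, ne_eq,
        Fin.ext_iff] at * <;> (try split_ifs) <;> omega
  · refine ⟨.inl ⟨j - 1, by omega⟩, ?_, ?_⟩ <;>
      simp only [extremalColoring, Sum.elim_inl, Sum.elim_inr, adj_inl_inr, ne_eq,
        Fin.ext_iff] at * <;> split_ifs at * <;> omega

theorem isGreedyPackingColoring_extremalColoring (hn : 3 ≤ n) :
    IsGreedyPackingColoring (completeBipartiteMinusMatching n) (2 * n - 2)
      (extremalColoring n) := by
  refine ⟨⟨extremalColoring_mem_Icc hn, fun x y hxy h _ ↦ ?_⟩, ⟨.inr ⟨n - 1, by omega⟩, ?_⟩,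
    fun x j hj₁ hjx ↦ ?_⟩
  · obtain ⟨rfl, hle⟩ := eq_swap_of_extremalColoring_eq hxy h
    rw [dist_swap hn]
    omega
  · simp only [extremalColoring, Sum.elim_inr]
    split_ifs <;> omega
  · rcases le_or_gt j 2 with hj₂ | hj₃
    · obtain ⟨u, hu, hadj⟩ := exists_adj_extremalColoring_eq hn hj₁ hj₂ hjx
      exact ⟨u, hu, hadj.reachable, (dist_eq_one_iff_adj.mpr hadj).le.trans hj₁⟩
    · obtain ⟨u, hu⟩ := exists_extremalColoring_eq (n := n) hj₃
        (by have := (extremalColoring_mem_Icc hn x).2; omega)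
      exact ⟨u, hu, reachable hn u x, (dist_le_three hn u x).trans hj₃⟩

end completeBipartiteMinusMatching

/-- For `n ≥ 3`, the graph `K_{n,n}` minus a perfect matching satisfies
`Γρ(K_{n,n} - M) = 2n - 2`. -/
theorem grundyPackingChromaticNumber_completeBipartiteMinusMatching (n : ℕ) (hn : 3 ≤ n) :
    grundyPackingChromaticNumber (completeBipartiteMinusMatching n) = 2 * n - 2 :=
  grundyPackingChromaticNumber_eq
    ⟨_, completeBipartiteMinusMatching.isGreedyPackingColoring_extremalColoring hn⟩
    fun _ _ hc ↦ completeBipartiteMinusMatching.le_of_isGreedyPackingColoring hn hc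
end

section
/- If S is a split graph with diam(S) = 3, then Γρ(S) = Δ(S) + 1, where Δ(S) is the maximum degree of S. -/
open SimpleGraph

/-!
Let `s` be the clique of the split graph. Every vertex of `s` is within distance `2` of every
vertex, so a pair at distance `3` lies outside `s`; its two ends have distinct neighbours in `s`,
and a vertex of `s` with a neighbour outside `s` has degree at least `|s|`, so `2 ≤ |s| ≤ Δ`.

Upper bound: in a greedy packing `k`-colouring the colours `2, …, k` are all used, and every vertex
of colour `≠ 1` is adjacent to a vertex of colour `1`. If some `z ∈ s` has colour `1`, it is the
only vertex of colour `1` in `s`, so all vertices of colour `≠ 1` lie in `N(z)`; otherwise they all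
lie in `s`. Either way there are at most `Δ` of them, so `k ≤ Δ + 1`.

Lower bound: take `z ∈ s` of degree `Δ` and `w ∈ s \ {z}`. Colour the non-neighbours of `z` (an
independent set) with `1`, `w` with `2` and the other neighbours of `z` with `3, …, Δ + 1`. Colour
`2` sits in the clique, hence within distance `2` of everything, and all distances are at most `3`,
so this colouring is greedy.
-/

open Finset

section

variable {V : Type*}

theorem dist_le_graphDiam [Fintype V] (G : SimpleGraph V) (u v : V) :
    G.dist u v ≤ graphDiam G :=
  (Finset.le_sup (f := fun v => G.dist u v) (mem_univ v)).trans
    (Finset.le_sup (f := _root_.eccent G) (mem_univ u))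

theorem exists_dist_eq_graphDiam [Fintype V] [Nonempty V] (G : SimpleGraph V) :
    ∃ u v, G.dist u v = graphDiam G := by
  obtain ⟨u, -, hu⟩ := exists_mem_eq_sup univ univ_nonempty (_root_.eccent G)
  obtain ⟨v, -, hv⟩ := exists_mem_eq_sup univ univ_nonempty (fun v => G.dist u v)
  exact ⟨u, v, by rw [graphDiam, hu, _root_.eccent, hv]⟩

variable {G : SimpleGraph V}

namespace IsPackingColoring

variable {k : ℕ} {c : V → ℕ} {u v : V}

theorem not_adj_of_apply_eq_one (hc : IsPackingColoring G k c) (hu : c u = 1) (hv : c v = 1) :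
    ¬G.Adj u v := fun huv => by
  have := hc.2 u v huv.ne (hu.trans hv.symm) huv.reachable
  rw [dist_eq_one_iff_adj.2 huv, hu] at this
  exact this.false

end IsPackingColoring

namespace IsGreedyPackingColoring

variable {k : ℕ} {c : V → ℕ} {v : V}

theorem exists_apply_eq_s14 (hc : IsGreedyPackingColoring G k c) {j : ℕ} (hj : 1 ≤ j) (hjk : j ≤ k) :
    ∃ v, c v = j := by
  obtain ⟨v, hv⟩ := hc.2.1
  obtain rfl | hlt := hjk.eq_or_lt
  · exact ⟨v, hv⟩
  · obtain ⟨u, hu, -⟩ := hc.2.2 v j hj (hv ▸ hlt)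
    exact ⟨u, hu⟩

theorem exists_adj_apply_eq_one (hc : IsGreedyPackingColoring G k c) (hv : c v ≠ 1) :
    ∃ u, c u = 1 ∧ G.Adj u v := by
  obtain ⟨u, hu, huv, hle⟩ := hc.2.2 v 1 le_rfl (by have := (hc.1.1 v).1; omega)
  have hne : u ≠ v := by rintro rfl; exact hv hu
  have := huv.pos_dist_of_ne hne
  exact ⟨u, hu, dist_eq_one_iff_adj.1 (by omega)⟩

theorem le_card_filter_ne_one_add_one [Fintype V] [DecidableEq V]
    (hc : IsGreedyPackingColoring G k c) : k ≤ #{v | c v ≠ 1} + 1 := by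
  have hsub : Icc 2 k ⊆ image c {v | c v ≠ 1} := fun j hj => by
    obtain ⟨hj2, hjk⟩ := mem_Icc.1 hj
    obtain ⟨v, rfl⟩ := hc.exists_apply_eq_s14 (by omega) hjk
    exact mem_image_of_mem c (mem_filter.2 ⟨mem_univ v, by omega⟩)
  have := (card_le_card hsub).trans card_image_le
  rw [Nat.card_Icc] at this
  omega

end IsGreedyPackingColoring

theorem isGreedyPackingColoring_of_dist_le_three (hG : G.Connected)
    (hd : ∀ u v, G.dist u v ≤ 3) {k : ℕ} (hk : 2 ≤ k) {c : V → ℕ}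
    (hrange : ∀ v, 1 ≤ c v ∧ c v ≤ k) (hsurj : ∀ j, 2 ≤ j → j ≤ k → ∃ v, c v = j)
    (hinj : ∀ u v, 2 ≤ c u → c u = c v → u = v)
    (hindep : ∀ u v, c u = 1 → c v = 1 → ¬G.Adj u v)
    (hdom : ∀ v, c v ≠ 1 → ∃ u, c u = 1 ∧ G.Adj u v)
    (htwo : ∀ u v, c u = 2 → G.dist u v ≤ 2) :
    IsGreedyPackingColoring G k c := by
  refine ⟨⟨hrange, fun u v huv hcuv _ => ?_⟩, hsurj k hk le_rfl, fun v j hj hjv => ?_⟩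
  · have hu1 : c u = 1 := by
      by_contra hu1
      exact huv (hinj u v (by have := (hrange u).1; omega) hcuv)
    rw [hu1]
    exact (hG u v).one_lt_dist_of_ne_of_not_adj huv (hindep u v hu1 (hcuv ▸ hu1))
  · have hjk : j ≤ k := by have := (hrange v).2; omega
    obtain rfl | rfl | hj3 : j = 1 ∨ j = 2 ∨ 3 ≤ j := by omega
    · obtain ⟨u, hu, huv⟩ := hdom v (by omega)
      exact ⟨u, hu, hG u v, (dist_eq_one_iff_adj.2 huv).le⟩
    · obtain ⟨u, hu⟩ := hsurj 2 le_rfl hjk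
      exact ⟨u, hu, hG u v, htwo u v hu⟩
    · obtain ⟨u, hu⟩ := hsurj j (by omega) hjk
      exact ⟨u, hu, hG u v, (hd u v).trans hj3⟩

namespace SimpleGraph

structure IsSplitPartition (G : SimpleGraph V) (s : Finset V) : Prop where
  isClique : G.IsClique (s : Set V)
  isIndepSet_compl : G.IsIndepSet (s : Set V)ᶜ

namespace IsSplitPartition

variable {s : Finset V} {u v w x y z : V}

theorem mem_of_adj_of_notMem (h : G.IsSplitPartition s) (hv : v ∉ s) (hvw : G.Adj v w) :
    w ∈ s := by
  by_contra hw
  exact h.isIndepSet_compl hv hw hvw.ne hvw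

theorem exists_adj_of_notMem [Nontrivial V] (h : G.IsSplitPartition s) (hG : G.Preconnected)
    (hv : v ∉ s) : ∃ x ∈ s, G.Adj v x := by
  obtain ⟨x, hx⟩ := exists_adj_iff_not_isIsolated.2 (hG.not_isIsolated v)
  exact ⟨x, h.mem_of_adj_of_notMem hv hx, hx⟩

theorem dist_le_two (h : G.IsSplitPartition s) (hG : G.Connected) (hx : x ∈ s) (v : V) :
    G.dist x v ≤ 2 := by
  obtain rfl | hxv := eq_or_ne x v
  · simp
  by_cases hv : v ∈ s
  · exact (dist_eq_one_iff_adj.2 (h.isClique hx hv hxv)).le.trans one_le_two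
  have := nontrivial_of_ne x v hxv
  obtain ⟨y, hy, hvy⟩ := h.exists_adj_of_notMem hG.preconnected hv
  obtain rfl | hxy := eq_or_ne x y
  · exact (dist_eq_one_iff_adj.2 hvy.symm).le.trans one_le_two
  calc G.dist x v ≤ G.dist x y + G.dist y v := hG.dist_triangle
    _ = 2 := by rw [dist_eq_one_iff_adj.2 (h.isClique hx hy hxy), dist_eq_one_iff_adj.2 hvy.symm]

theorem not_adj_of_not_adj (h : G.IsSplitPartition s) (hz : z ∈ s) (hu : ¬G.Adj z u)
    (hv : ¬G.Adj z v) : ¬G.Adj u v := by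
  rintro huv
  obtain rfl | hzu := eq_or_ne z u
  · exact hv huv
  obtain rfl | hzv := eq_or_ne z v
  · exact hu huv.symm
  have hs : ∀ {y}, z ≠ y → ¬G.Adj z y → y ∉ s := fun hzy hy hys => hy (h.isClique hz hys hzy)
  exact h.isIndepSet_compl (hs hzu hu) (hs hzv hv) huv.ne huv

theorem notMem_of_dist_eq_three (h : G.IsSplitPartition s) (hG : G.Connected)
    (huv : G.dist u v = 3) : u ∉ s := fun hu => by
  have := h.dist_le_two hG hu v
  omega

theorem one_lt_card_of_dist_eq_three (h : G.IsSplitPartition s) (hG : G.Connected)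
    (huv : G.dist u v = 3) : 1 < #s := by
  have := nontrivial_of_ne u v (by rintro rfl; simp at huv)
  obtain ⟨a, ha, hua⟩ := h.exists_adj_of_notMem hG.preconnected (h.notMem_of_dist_eq_three hG huv)
  obtain ⟨b, hb, hvb⟩ := h.exists_adj_of_notMem hG.preconnected
    (h.notMem_of_dist_eq_three hG (dist_comm.trans huv))
  refine one_lt_card.2 ⟨a, ha, b, hb, fun hab => ?_⟩
  subst hab
  have := hG.dist_triangle (u := u) (v := a) (w := v)
  rw [dist_eq_one_iff_adj.2 hua, dist_eq_one_iff_adj.2 hvb.symm] at this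
  omega

variable [Fintype V] [DecidableRel G.Adj]

theorem degree_le_card (h : G.IsSplitPartition s) (hy : y ∉ s) : G.degree y ≤ #s := by
  rw [← card_neighborFinset_eq_degree]
  exact card_le_card fun x hx => h.mem_of_adj_of_notMem hy ((mem_neighborFinset _ _ _).1 hx)

theorem card_le_degree (h : G.IsSplitPartition s) (hx : x ∈ s) (hy : y ∉ s) (hxy : G.Adj x y) :
    #s ≤ G.degree x := by
  classical
  rw [← card_neighborFinset_eq_degree, ← card_erase_add_one hx, ← card_insert_of_notMem
    fun hy' => hy (mem_of_mem_erase hy')]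
  refine card_le_card (insert_subset ((mem_neighborFinset _ _ _).2 hxy) fun a ha => ?_)
  obtain ⟨hax, has⟩ := mem_erase.1 ha
  exact (mem_neighborFinset _ _ _).2 (h.isClique hx has hax.symm)

theorem exists_mem_degree_eq_maxDegree (h : G.IsSplitPartition s) (hG : G.Connected)
    (hs : s.Nonempty) : ∃ z ∈ s, G.degree z = G.maxDegree := by
  obtain ⟨a, ha⟩ := hs
  have : Nonempty V := ⟨a⟩
  obtain ⟨y, hy⟩ := G.exists_maximal_degree_vertex
  by_cases hys : y ∈ s
  · exact ⟨y, hys, hy.symm⟩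
  have := nontrivial_of_ne a y (by rintro rfl; exact hys ha)
  obtain ⟨x, hx, hyx⟩ := h.exists_adj_of_notMem hG.preconnected hys
  have := (h.degree_le_card hys).trans (h.card_le_degree hx hys hyx.symm)
  exact ⟨x, hx, le_antisymm (G.degree_le_maxDegree x) (hy ▸ this)⟩

theorem card_le_maxDegree_of_dist_eq_three (h : G.IsSplitPartition s) (hG : G.Connected)
    (huv : G.dist u v = 3) : #s ≤ G.maxDegree := by
  have := nontrivial_of_ne u v (by rintro rfl; simp at huv)
  obtain ⟨x, hx, hux⟩ := h.exists_adj_of_notMem hG.preconnected (h.notMem_of_dist_eq_three hG huv)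
  exact (h.card_le_degree hx (h.notMem_of_dist_eq_three hG huv) hux.symm).trans
    (G.degree_le_maxDegree x)

theorem card_filter_ne_one_le (h : G.IsSplitPartition s) {k : ℕ} {c : V → ℕ}
    (hc : IsGreedyPackingColoring G k c) (hs : #s ≤ G.maxDegree) :
    #{v | c v ≠ 1} ≤ G.maxDegree := by
  by_cases hz : ∃ z ∈ s, c z = 1
  · obtain ⟨z, hz, hz1⟩ := hz
    -- vertices of colour `1` are pairwise non-adjacent, so `z` is the only one in `s`
    have hsub : ({v | c v ≠ 1} : Finset V) ⊆ G.neighborFinset z := fun v hv => by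
      replace hv : c v ≠ 1 := (mem_filter.1 hv).2
      have hzv : z ≠ v := by rintro rfl; exact hv hz1
      rw [mem_neighborFinset]
      by_cases hvs : v ∈ s
      · exact h.isClique hz hvs hzv
      obtain ⟨u, hu1, huv⟩ := hc.exists_adj_apply_eq_one hv
      obtain rfl | huz := eq_or_ne u z
      · exact huv
      exact absurd (h.isClique (h.mem_of_adj_of_notMem hvs huv.symm) hz huz)
        (hc.1.not_adj_of_apply_eq_one hu1 hz1)
    exact (card_le_card hsub).trans ((card_neighborFinset_eq_degree G z).trans_le
      (G.degree_le_maxDegree z))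
  · push Not at hz
    refine le_trans (card_le_card fun v hv => ?_) hs
    by_contra hvs
    obtain ⟨u, hu1, huv⟩ := hc.exists_adj_apply_eq_one (mem_filter.1 hv).2
    exact hz u (h.mem_of_adj_of_notMem hvs huv.symm) hu1

/-- Colour the non-neighbours of `z` with `1` and its neighbours with `2, …, deg z + 1`, giving
colour `2` to `w`. -/
theorem exists_isGreedyPackingColoring (h : G.IsSplitPartition s) (hG : G.Connected)
    (hd : ∀ u v, G.dist u v ≤ 3) (hz : z ∈ s) (hw : w ∈ s) (hwz : w ≠ z) :
    ∃ c, IsGreedyPackingColoring G (G.degree z + 1) c := by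
  classical
  set N := G.neighborFinset z
  have hwN : w ∈ N := (mem_neighborFinset _ _ _).2 (h.isClique hz hw hwz.symm)
  have hN : #N = G.degree z := card_neighborFinset_eq_degree G z
  have hpos : 0 < #N := card_pos.2 ⟨w, hwN⟩
  obtain ⟨e, hew⟩ : ∃ e : N ≃ Fin #N, e ⟨w, hwN⟩ = ⟨0, hpos⟩ :=
    ⟨N.equivFin.trans (Equiv.swap (N.equivFin ⟨w, hwN⟩) ⟨0, hpos⟩), by simp⟩
  let c : V → ℕ := fun v => if hv : v ∈ N then e ⟨v, hv⟩ + 2 else 1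
  have hcN : ∀ v (hv : v ∈ N), c v = e ⟨v, hv⟩ + 2 := fun v hv => dif_pos hv
  have hc1 : ∀ v, c v = 1 ↔ v ∉ N := fun v => by
    by_cases hv : v ∈ N
    · simp [hcN v hv, hv]
    · simp [c, hv]
  have hmem : ∀ v, 2 ≤ c v → v ∈ N := fun v hv => by
    by_contra hvN
    rw [(hc1 v).2 hvN] at hv
    omega
  refine ⟨c, isGreedyPackingColoring_of_dist_le_three hG hd (by omega) (fun v => ?_)
    (fun j hj hjk => ?_) (fun u v hu huv => ?_) (fun u v hu hv => ?_) (fun v hv => ?_)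
    (fun u v hu => ?_)⟩
  · by_cases hv : v ∈ N
    · have := (e ⟨v, hv⟩).isLt
      rw [hcN v hv]
      omega
    · rw [(hc1 v).2 hv]
      omega
  · refine ⟨e.symm ⟨j - 2, by omega⟩, ?_⟩
    rw [hcN _ (e.symm _).2]
    simp only [Subtype.coe_eta, Equiv.apply_symm_apply]
    omega
  · have hu' := hmem u hu
    have hv' := hmem v (huv ▸ hu)
    rw [hcN u hu', hcN v hv'] at huv
    have he : (e ⟨u, hu'⟩ : ℕ) = e ⟨v, hv'⟩ := by omega
    exact congrArg Subtype.val (e.injective (Fin.ext he))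
  · exact h.not_adj_of_not_adj hz (by simpa [N] using (hc1 u).1 hu)
      (by simpa [N] using (hc1 v).1 hv)
  · refine ⟨z, (hc1 z).2 (by simp [N]), ?_⟩
    by_contra hzv
    exact hv ((hc1 v).2 (by simpa [N] using hzv))
  · have hu' := hmem u hu.ge
    obtain rfl : u = w := by
      rw [hcN u hu'] at hu
      have he0 : e ⟨u, hu'⟩ = ⟨0, hpos⟩ := Fin.ext (by simp only; omega)
      exact congrArg Subtype.val (e.injective (he0.trans hew.symm))
    exact h.dist_le_two hG hw v

end IsSplitPartition

end SimpleGraph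

end

/-- If `S` is a split graph with `diam(S) = 3`, then `Γρ(S) = Δ(S) + 1`. -/
theorem grundyPackingChromaticNumber_splitGraph {V : Type*} [Fintype V]
    (G : SimpleGraph V) [DecidableRel G.Adj] (hG : G.Connected)
    (hsplit : ∃ s : Set V, (∀ u ∈ s, ∀ v ∈ s, u ≠ v → G.Adj u v) ∧
      (∀ u ∉ s, ∀ v ∉ s, ¬ G.Adj u v))
    (hd : graphDiam G = 3) :
    grundyPackingChromaticNumber G = G.maxDegree + 1 := by
  classical
  obtain ⟨s, hclique, hindep⟩ := hsplit
  have hS : G.IsSplitPartition s.toFinset := by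
    constructor <;> rw [Set.coe_toFinset]
    exacts [fun u hu v hv => hclique u hu v hv, fun u hu v hv _ => hindep u hu v hv]
  have := hG.nonempty
  obtain ⟨u, v, huv⟩ := exists_dist_eq_graphDiam G
  rw [hd] at huv
  have hsΔ := hS.card_le_maxDegree_of_dist_eq_three hG huv
  have hs := hS.one_lt_card_of_dist_eq_three hG huv
  obtain ⟨z, hz, hzΔ⟩ := hS.exists_mem_degree_eq_maxDegree hG (card_pos.1 (by omega))
  obtain ⟨w, hw, hwz⟩ := exists_mem_ne hs z
  obtain ⟨c, hc⟩ := hS.exists_isGreedyPackingColoring hG (hd ▸ dist_le_graphDiam G) hz hw hwz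
  refine IsGreatest.csSup_eq ⟨⟨c, hzΔ ▸ hc⟩, ?_⟩
  rintro k ⟨c, hc⟩
  have := hc.le_card_filter_ne_one_add_one
  have := hS.card_filter_ne_one_le hc hsΔ
  omega
end
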